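/- Let A ∈ M_n with W(A) ⊆ S_α for some α ∈ [0, π/2). Then for every s > 0 there exists a unitary matrix U ∈ M_n such that |A| ≤ (sec α / 2)·(s·Re A + s^{-1}·U* (Re A) U). -/

import Mathlib

open Matrix Set ComplexOrder

variable {m : Type*}

/-- The modulus `|X| = (XᴴX)^{1/2}` of a matrix. -/
noncomputable def matAbs [Fintype m] [DecidableEq m] (X : Matrix m m ℂ) : Matrix m m ℂ :=
  (Matrix.posSemidef_conjTranspose_mul_self X).1.eigenvectorUnitary.1 *
    diagonal ((↑) ∘ (√·) ∘ (Matrix.posSemidef_conjTranspose_mul_self X).1.eigenvalues) *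
    (star (Matrix.posSemidef_conjTranspose_mul_self X).1.eigenvectorUnitary : Matrix m m ℂ)

theorem matAbs_posSemidef [Fintype m] [DecidableEq m] (X : Matrix m m ℂ) :
    (matAbs X).PosSemidef := by
  unfold matAbs
  rw [Matrix.star_eq_conjTranspose]
  exact (Matrix.posSemidef_diagonal_iff.mpr (fun i => by
    simp only [Function.comp_apply]
    exact_mod_cast Real.sqrt_nonneg _)).mul_mul_conjTranspose_same _

/-- Functional calculus: apply `f : ℝ → ℝ` to a Hermitian matrix via its spectral
decomposition (junk value `0` for non-Hermitian input). -/
noncomputable def matFun [Fintype m] [DecidableEq m] (f : ℝ → ℝ) (X : Matrix m m ℂ) :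
    Matrix m m ℂ :=
  if h : X.IsHermitian then
    (h.eigenvectorUnitary : Matrix m m ℂ) *
      Matrix.diagonal (fun i => (f (h.eigenvalues i) : ℂ)) *
      star (h.eigenvectorUnitary : Matrix m m ℂ)
  else 0

/-- Real part `Re A = (A + Aᴴ)/2`. -/
noncomputable def reM (A : Matrix m m ℂ) : Matrix m m ℂ := (1/2 : ℂ) • (A + Aᴴ)

/-- Imaginary part `Im A = (A - Aᴴ)/(2i)`. -/
noncomputable def imM (A : Matrix m m ℂ) : Matrix m m ℂ := (1/(2*Complex.I)) • (A - Aᴴ)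

/-- Numerical range `W(A) = {x* A x : x*x = 1}`. -/
def numRange [Fintype m] (A : Matrix m m ℂ) : Set ℂ :=
  {z | ∃ x : m → ℂ, star x ⬝ᵥ x = 1 ∧ z = star x ⬝ᵥ A.mulVec x}

/-- The sector `S_α = {z : Re z ≥ 0, |Im z| ≤ (Re z) tan α}`. -/
def sector (α : ℝ) : Set ℂ := {z | 0 ≤ z.re ∧ |z.im| ≤ z.re * Real.tan α}

/-!
Take the polar decomposition `A = V |A|`, so that `x* |A| x = (V x)* A x`. If `W(A) ⊆ S_α`,
the form of `A` satisfies the sectorial Cauchy–Schwarz inequality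
`cos α |y* A x| ≤ (x* Re A x)^{1/2} (y* Re A y)^{1/2}`; in its AM–GM form with weight `s`
and `y = V x` this is the theorem, with `U = V`.

For the inequality put `ζ = sin α + i cos α = e^{i(π/2 - α)}`. The sector condition makes
`Re (ζ A)` and `Re (ζ̄ A)` positive semidefinite; their sum is `2 sin α Re A`, while
`ζ Re (ζ A) - ζ̄ Re (ζ̄ A) = 2i sin α cos α A`, so Cauchy–Schwarz for these two semidefinite
forms gives the bound when `α > 0`. Since `S_α ⊆ S_β` for `β > α`, the degenerate case
`α = 0` follows by letting `β` decrease to `α`.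
-/

open Real

lemma ofReal_mul_mem_sector {α r : ℝ} {z : ℂ} (hr : 0 ≤ r) (hz : z ∈ sector α) :
    (r : ℂ) * z ∈ sector α := by
  obtain ⟨hre, him⟩ := hz
  refine ⟨by simpa using mul_nonneg hr hre, ?_⟩
  simp only [Complex.re_ofReal_mul, Complex.im_ofReal_mul, abs_mul, abs_of_nonneg hr, mul_assoc]
  exact mul_le_mul_of_nonneg_left him hr

lemma sector_mono {α β : ℝ} (hα : 0 ≤ α) (hαβ : α ≤ β) (hβ : β < π / 2) :
    sector α ⊆ sector β := by
  have hπ := pi_pos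
  rintro z ⟨hre, him⟩
  refine ⟨hre, him.trans (mul_le_mul_of_nonneg_left ?_ hre)⟩
  exact strictMonoOn_tan.monotoneOn ⟨by linarith, by linarith⟩ ⟨by linarith, hβ⟩ hαβ

lemma abs_cos_mul_im_le_of_mem_sector {α : ℝ} {z : ℂ} (hα : 0 < cos α) (hz : z ∈ sector α) :
    |cos α * z.im| ≤ sin α * z.re := by
  calc |cos α * z.im| = cos α * |z.im| := by rw [abs_mul, abs_of_pos hα]
    _ ≤ cos α * (z.re * tan α) := mul_le_mul_of_nonneg_left hz.2 hα.le
    _ = sin α * z.re := by rw [tan_eq_sin_div_cos]; field_simp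

lemma star_dotProduct_self_eq_norm_sq [Fintype m] (x : m → ℂ) :
    star x ⬝ᵥ x = ((‖WithLp.toLp 2 x‖ ^ 2 : ℝ) : ℂ) := by
  rw [dotProduct_comm, ← EuclideanSpace.inner_toLp_toLp, inner_self_eq_norm_sq_to_K]
  push_cast
  rfl

lemma dotProduct_mulVec_mem_sector [Fintype m] {A : Matrix m m ℂ} {α : ℝ}
    (hA : numRange A ⊆ sector α) (x : m → ℂ) : star x ⬝ᵥ A *ᵥ x ∈ sector α := by
  rcases eq_or_ne x 0 with rfl | hx
  · simp [sector]
  obtain ⟨c, hc_def⟩ : ∃ c, ‖WithLp.toLp 2 x‖ = c := ⟨_, rfl⟩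
  have hc : (c : ℂ) ≠ 0 := by simpa [← hc_def] using hx
  have hw : star ((c⁻¹ : ℂ) • x) ⬝ᵥ (c⁻¹ : ℂ) • x = 1 := by
    rw [star_smul, smul_dotProduct, dotProduct_smul, star_dotProduct_self_eq_norm_sq, hc_def]
    simp only [smul_eq_mul, Complex.star_def, map_inv₀, Complex.conj_ofReal]
    push_cast
    field_simp
  have hq : star x ⬝ᵥ A *ᵥ x = ((c ^ 2 : ℝ) : ℂ) *
      (star ((c⁻¹ : ℂ) • x) ⬝ᵥ A *ᵥ ((c⁻¹ : ℂ) • x)) := by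
    simp only [star_smul, mulVec_smul, smul_dotProduct, dotProduct_smul, smul_eq_mul,
      Complex.star_def, map_inv₀, Complex.conj_ofReal]
    push_cast
    field_simp
  rw [hq]
  exact ofReal_mul_mem_sector (sq_nonneg c) (hA ⟨_, hw, rfl⟩)

lemma star_dotProduct_conjTranspose_mulVec [Fintype m] (M : Matrix m m ℂ) (x y : m → ℂ) :
    star y ⬝ᵥ Mᴴ *ᵥ x = star (star x ⬝ᵥ M *ᵥ y) := by
  rw [star_dotProduct, star_mulVec, conjTranspose_conjTranspose, ← dotProduct_mulVec]

lemma star_dotProduct_conjTranspose_mul_mulVec [Fintype m] (B M : Matrix m m ℂ) (x y : m → ℂ) :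
    star y ⬝ᵥ (Bᴴ * M) *ᵥ x = star (B *ᵥ y) ⬝ᵥ M *ᵥ x := by
  rw [← mulVec_mulVec, dotProduct_mulVec, star_mulVec, ← dotProduct_mulVec]

lemma star_dotProduct_reM_mulVec_self [Fintype m] (A : Matrix m m ℂ) (x : m → ℂ) :
    star x ⬝ᵥ reM A *ᵥ x = ((star x ⬝ᵥ A *ᵥ x).re : ℂ) := by
  rw [reM, smul_mulVec, add_mulVec, dotProduct_smul, dotProduct_add,
    star_dotProduct_conjTranspose_mulVec, Complex.star_def, Complex.add_conj, smul_eq_mul]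
  push_cast
  ring

lemma isHermitian_reM [Fintype m] (A : Matrix m m ℂ) : (reM A).IsHermitian := by
  rw [IsHermitian, reM, conjTranspose_smul, conjTranspose_add, conjTranspose_conjTranspose,
    add_comm]
  norm_num

lemma posSemidef_reM [Fintype m] {A : Matrix m m ℂ} (h : ∀ x, 0 ≤ (star x ⬝ᵥ A *ᵥ x).re) :
    (reM A).PosSemidef :=
  .of_dotProduct_mulVec_nonneg (isHermitian_reM A) fun x => by
    rw [star_dotProduct_reM_mulVec_self]
    exact Complex.zero_le_real.mpr (h x)

lemma smul_reM_smul_sub_smul_reM_smul (A : Matrix m m ℂ) (ζ : ℂ) :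
    ζ • reM (ζ • A) - star ζ • reM (star ζ • A) = ((ζ ^ 2 - star ζ ^ 2) / 2) • A := by
  simp only [reM, conjTranspose_smul, star_star, smul_add, smul_smul]
  module

open scoped MatrixOrder in
lemma Matrix.PosSemidef.norm_dotProduct_mulVec_le [Fintype m] {H : Matrix m m ℂ}
    (hH : H.PosSemidef) (x y : m → ℂ) {t : ℝ} (ht : 0 < t) :
    ‖star y ⬝ᵥ H *ᵥ x‖ ≤ (t * (star x ⬝ᵥ H *ᵥ x).re + t⁻¹ * (star y ⬝ᵥ H *ᵥ y).re) / 2 := by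
  classical
  obtain ⟨B, rfl⟩ := CStarAlgebra.nonneg_iff_eq_star_mul_self.mp hH.nonneg
  have hinner (u v : m → ℂ) : star v ⬝ᵥ (star B * B) *ᵥ u =
      inner ℂ (WithLp.toLp 2 (B *ᵥ v)) (WithLp.toLp 2 (B *ᵥ u)) := by
    rw [EuclideanSpace.inner_toLp_toLp, ← mulVec_mulVec, dotProduct_mulVec, star_eq_conjTranspose,
      vecMul_conjTranspose, star_star, dotProduct_comm]
  have hnorm (u : m → ℂ) : (star u ⬝ᵥ (star B * B) *ᵥ u).re = ‖WithLp.toLp 2 (B *ᵥ u)‖ ^ 2 := by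
    rw [hinner, inner_self_eq_norm_sq_to_K]
    norm_cast
  rw [hinner, hnorm, hnorm]
  set a := ‖WithLp.toLp 2 (B *ᵥ x)‖
  set b := ‖WithLp.toLp 2 (B *ᵥ y)‖
  have amgm : t * a ^ 2 + t⁻¹ * b ^ 2 - 2 * (b * a) = t⁻¹ * (t * a - b) ^ 2 := by
    field_simp
    ring
  have cauchy_schwarz := norm_inner_le_norm (𝕜 := ℂ) (WithLp.toLp 2 (B *ᵥ y)) (WithLp.toLp 2 (B *ᵥ x))
  nlinarith [mul_nonneg (inv_nonneg.mpr ht.le) (sq_nonneg (t * a - b))]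

lemma cos_mul_norm_dotProduct_mulVec_le_of_pos [Fintype m] {A : Matrix m m ℂ} {α : ℝ}
    (hα₀ : 0 < α) (hα₁ : α < π / 2) (hA : ∀ x, star x ⬝ᵥ A *ᵥ x ∈ sector α)
    (x y : m → ℂ) {t : ℝ} (ht : 0 < t) :
    cos α * ‖star y ⬝ᵥ A *ᵥ x‖ ≤
      (t * (star x ⬝ᵥ A *ᵥ x).re + t⁻¹ * (star y ⬝ᵥ A *ᵥ y).re) / 2 := by
  have hsin : 0 < sin α := sin_pos_of_pos_of_lt_pi hα₀ (by linarith [pi_pos])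
  have hcos : 0 < cos α := cos_pos_of_mem_Ioo ⟨by linarith, hα₁⟩
  set ζ : ℂ := sin α + cos α * Complex.I
  have hζre (q : ℂ) : (ζ * q).re = sin α * q.re - cos α * q.im := by
    simp [ζ, -Complex.ofReal_sin, -Complex.ofReal_cos]
  have hζre' (q : ℂ) : (star ζ * q).re = sin α * q.re + cos α * q.im := by
    simp [ζ, -Complex.ofReal_sin, -Complex.ofReal_cos]
  have hsector (z : m → ℂ) := abs_le.mp (abs_cos_mul_im_le_of_mem_sector hcos (hA z))
  set Hp := reM (ζ • A)
  set Hm := reM (star ζ • A)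
  have hHp : Hp.PosSemidef := posSemidef_reM fun z => by
    rw [smul_mulVec, dotProduct_smul, smul_eq_mul, hζre]
    linarith [hsector z]
  have hHm : Hm.PosSemidef := posSemidef_reM fun z => by
    rw [smul_mulVec, dotProduct_smul, smul_eq_mul, hζre']
    linarith [hsector z]
  have hsum (z : m → ℂ) : (star z ⬝ᵥ Hp *ᵥ z).re + (star z ⬝ᵥ Hm *ᵥ z).re =
      2 * sin α * (star z ⬝ᵥ A *ᵥ z).re := by
    simp only [Hp, Hm, star_dotProduct_reM_mulVec_self, Complex.ofReal_re, smul_mulVec,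
      dotProduct_smul, smul_eq_mul, hζre, hζre']
    ring
  have hid : (ζ ^ 2 - star ζ ^ 2) / 2 * (star y ⬝ᵥ A *ᵥ x) =
      ζ * (star y ⬝ᵥ Hp *ᵥ x) - star ζ * (star y ⬝ᵥ Hm *ᵥ x) := by
    have := congrArg (fun M => star y ⬝ᵥ M *ᵥ x) (smul_reM_smul_sub_smul_reM_smul A ζ)
    simpa only [sub_mulVec, smul_mulVec, dotProduct_sub, dotProduct_smul, smul_eq_mul]
      using this.symm
  have hcoef : ‖(ζ ^ 2 - star ζ ^ 2) / 2‖ = 2 * sin α * cos α := by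
    have : (ζ ^ 2 - star ζ ^ 2) / 2 = ((2 * sin α * cos α : ℝ) : ℂ) * Complex.I := by
      simp only [ζ, Complex.star_def, map_add, map_mul, Complex.conj_ofReal, Complex.conj_I]
      push_cast
      ring
    rw [this, norm_mul, Complex.norm_I, Complex.norm_real, Real.norm_of_nonneg (by positivity),
      mul_one]
  have hζ : ‖ζ‖ = 1 := by rw [Complex.norm_add_mul_I, sin_sq_add_cos_sq, sqrt_one]
  have key : 2 * sin α * (cos α * ‖star y ⬝ᵥ A *ᵥ x‖) ≤ 2 * sin α *
      ((t * (star x ⬝ᵥ A *ᵥ x).re + t⁻¹ * (star y ⬝ᵥ A *ᵥ y).re) / 2) := by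
    calc 2 * sin α * (cos α * ‖star y ⬝ᵥ A *ᵥ x‖)
        = ‖ζ * (star y ⬝ᵥ Hp *ᵥ x) - star ζ * (star y ⬝ᵥ Hm *ᵥ x)‖ := by
          rw [← hid, norm_mul, hcoef]; ring
      _ ≤ ‖star y ⬝ᵥ Hp *ᵥ x‖ + ‖star y ⬝ᵥ Hm *ᵥ x‖ := by
          simpa [hζ] using norm_sub_le (ζ * (star y ⬝ᵥ Hp *ᵥ x)) (star ζ * (star y ⬝ᵥ Hm *ᵥ x))
      _ ≤ (t * (star x ⬝ᵥ Hp *ᵥ x).re + t⁻¹ * (star y ⬝ᵥ Hp *ᵥ y).re) / 2 +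
          (t * (star x ⬝ᵥ Hm *ᵥ x).re + t⁻¹ * (star y ⬝ᵥ Hm *ᵥ y).re) / 2 :=
          add_le_add (hHp.norm_dotProduct_mulVec_le x y ht) (hHm.norm_dotProduct_mulVec_le x y ht)
      _ = _ := by linear_combination (t / 2) * hsum x + (t⁻¹ / 2) * hsum y
  exact le_of_mul_le_mul_left key (by positivity)

open Filter Topology in
lemma cos_mul_norm_dotProduct_mulVec_le [Fintype m] {A : Matrix m m ℂ} {α : ℝ}
    (hα₀ : 0 ≤ α) (hα₁ : α < π / 2) (hA : ∀ x, star x ⬝ᵥ A *ᵥ x ∈ sector α)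
    (x y : m → ℂ) {t : ℝ} (ht : 0 < t) :
    cos α * ‖star y ⬝ᵥ A *ᵥ x‖ ≤
      (t * (star x ⬝ᵥ A *ᵥ x).re + t⁻¹ * (star y ⬝ᵥ A *ᵥ y).re) / 2 := by
  have hβ : ∀ β ∈ Ioo α (π / 2), cos β * ‖star y ⬝ᵥ A *ᵥ x‖ ≤
      (t * (star x ⬝ᵥ A *ᵥ x).re + t⁻¹ * (star y ⬝ᵥ A *ᵥ y).re) / 2 := fun β hβ =>
    cos_mul_norm_dotProduct_mulVec_le_of_pos (hα₀.trans_lt hβ.1) hβ.2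
      (fun z => sector_mono hα₀ hβ.1.le hβ.2 (hA z)) x y ht
  refine le_of_tendsto ?_ (eventually_of_mem (Ioo_mem_nhdsGT hα₁) hβ)
  exact ((continuous_cos.tendsto α).mono_left nhdsWithin_le_nhds).mul_const _

lemma exists_unitary_mul_diagonal_eq [Fintype m] [DecidableEq m] (C : Matrix m m ℂ) (d : m → ℝ)
    (h : Cᴴ * C = diagonal fun i => (d i : ℂ) ^ 2) :
    ∃ U ∈ unitaryGroup m ℂ, C = U * diagonal fun i => (d i : ℂ) := by
  set col : m → EuclideanSpace ℂ m := fun j => WithLp.toLp 2 fun i => C i j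
  have hcol (i j : m) : inner ℂ (col i) (col j) = if i = j then (d i : ℂ) ^ 2 else 0 := by
    rw [← diagonal_apply (fun i => (d i : ℂ) ^ 2), ← h]
    simp [col, EuclideanSpace.inner_toLp_toLp, mul_apply, dotProduct, mul_comm]
  have hon : Orthonormal ℂ ({j | d j ≠ 0}.domRestrict fun j => ((d j : ℂ))⁻¹ • col j) := by
    rw [orthonormal_iff_ite]
    rintro ⟨i, hi⟩ ⟨j, hj⟩
    have : (d i : ℂ) ≠ 0 := by exact_mod_cast hi
    simp only [Set.domRestrict_apply, inner_smul_left, inner_smul_right, hcol, Subtype.mk.injEq]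
    split_ifs with hij
    · subst hij
      simp only [map_inv₀, Complex.conj_ofReal]
      field_simp
    · simp
  obtain ⟨b, hb⟩ := hon.exists_orthonormalBasis_extension_of_card_eq (by simp)
  refine ⟨(EuclideanSpace.basisFun m ℂ).toBasis.toMatrix b,
    (EuclideanSpace.basisFun m ℂ).toMatrix_orthonormalBasis_mem_unitary b, ?_⟩
  ext i j
  rw [mul_diagonal, Module.Basis.toMatrix_apply]
  simp only [EuclideanSpace.basisFun_toBasis, PiLp.basisFun_repr]
  by_cases hj : d j = 0
  · have : col j = 0 := inner_self_eq_zero.mp (by rw [hcol, if_pos rfl, hj]; simp)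
    simpa [hj] using congrArg (· i) this
  · have : (d j : ℂ) ≠ 0 := by exact_mod_cast hj
    rw [hb j hj]
    simp only [PiLp.smul_apply, smul_eq_mul, col]
    field_simp

lemma exists_unitary_eq_mul_of_conjTranspose_mul_self_eq [Fintype m] [DecidableEq m]
    {A P : Matrix m m ℂ} (hP : P.IsHermitian) (h : Aᴴ * A = P * P) :
    ∃ V ∈ unitaryGroup m ℂ, A = V * P := by
  obtain ⟨W, hW, d, rfl⟩ : ∃ W ∈ unitaryGroup m ℂ, ∃ d : m → ℝ,
      P = W * diagonal (fun i => (d i : ℂ)) * star W :=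
    ⟨_, hP.eigenvectorUnitary.2, hP.eigenvalues, by
      conv_lhs => rw [hP.spectral_theorem, Unitary.conjStarAlgAut_apply]
      rfl⟩
  have hWW : star W * W = 1 := mem_unitaryGroup_iff'.mp hW
  obtain ⟨U, hU, hAW⟩ := exists_unitary_mul_diagonal_eq (A * W) d <| by
    rw [conjTranspose_mul, ← star_eq_conjTranspose W, mul_assoc, ← mul_assoc Aᴴ, h]
    simp only [mul_assoc]
    rw [hWW, mul_one, ← mul_assoc (star W) W, hWW, one_mul, ← mul_assoc (star W) W, hWW, one_mul,
      diagonal_mul_diagonal]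
    simp only [sq]
  refine ⟨U * star W, mul_mem hU (Unitary.star_mem hW), ?_⟩
  calc A = A * W * star W := by rw [mul_assoc, mem_unitaryGroup_iff.mp hW, mul_one]
    _ = _ := by
      simp only [hAW, mul_assoc]
      rw [← mul_assoc (star W) W, hWW, one_mul]

lemma matAbs_mul_self [Fintype m] [DecidableEq m] (A : Matrix m m ℂ) :
    matAbs A * matAbs A = Aᴴ * A := by
  have hPSD := posSemidef_conjTranspose_mul_self A
  have hU : star (hPSD.1.eigenvectorUnitary : Matrix m m ℂ) *
      (hPSD.1.eigenvectorUnitary : Matrix m m ℂ) = 1 :=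
    mem_unitaryGroup_iff'.mp hPSD.1.eigenvectorUnitary.2
  conv_rhs => rw [hPSD.1.spectral_theorem, Unitary.conjStarAlgAut_apply]
  simp only [matAbs, mul_assoc]
  rw [← mul_assoc (star _) _ (Matrix.diagonal _ * _), hU, one_mul,
    ← mul_assoc (Matrix.diagonal _), diagonal_mul_diagonal]
  congr 3
  funext i
  simp only [Function.comp_apply]
  rw [← Complex.ofReal_mul, Real.mul_self_sqrt (hPSD.eigenvalues_nonneg i)]
  rfl

lemma posSemidef_sub_of_re_le [Fintype m] {M N : Matrix m m ℂ} (hM : M.IsHermitian)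
    (hN : N.IsHermitian) (h : ∀ x, (star x ⬝ᵥ N *ᵥ x).re ≤ (star x ⬝ᵥ M *ᵥ x).re) :
    (M - N).PosSemidef := by
  refine .of_dotProduct_mulVec_nonneg (hM.sub hN) fun x => ?_
  have hMx : (star x ⬝ᵥ M *ᵥ x).im = 0 := hM.im_star_dotProduct_mulVec_self x
  have hNx : (star x ⬝ᵥ N *ᵥ x).im = 0 := hN.im_star_dotProduct_mulVec_self x
  rw [sub_mulVec, dotProduct_sub, Complex.nonneg_iff, Complex.sub_re, Complex.sub_im, hMx, hNx]
  exact ⟨sub_nonneg.mpr (h x), by simp⟩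

lemma exists_unitary_conjTranspose_mul_eq_matAbs [Fintype m] [DecidableEq m]
    (A : Matrix m m ℂ) : ∃ V ∈ unitaryGroup m ℂ, Vᴴ * A = matAbs A := by
  obtain ⟨V, hV, hAV⟩ := exists_unitary_eq_mul_of_conjTranspose_mul_self_eq
    (matAbs_posSemidef A).1 (matAbs_mul_self A).symm
  refine ⟨V, hV, ?_⟩
  calc Vᴴ * A = Vᴴ * (V * matAbs A) := by rw [← hAV]
    _ = matAbs A := by
      rw [← mul_assoc, ← star_eq_conjTranspose, mem_unitaryGroup_iff'.mp hV, one_mul]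

theorem abs_le_sec_re {n : ℕ} (A : Matrix (Fin n) (Fin n) ℂ) (α : ℝ)
    (hα₀ : 0 ≤ α) (hα₁ : α < Real.pi / 2) (hA : numRange A ⊆ sector α) :
    ∀ s : ℝ, 0 < s → ∃ U ∈ Matrix.unitaryGroup (Fin n) ℂ,
      (((Real.cos α)⁻¹ / 2) • (s • reM A + s⁻¹ • (Uᴴ * reM A * U))
        - matAbs A).PosSemidef := by
  intro s hs
  obtain ⟨V, hV, hVA⟩ := exists_unitary_conjTranspose_mul_eq_matAbs A
  have hR := isHermitian_reM A
  refine ⟨V, hV, posSemidef_sub_of_re_le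
    (((hR.smul (.all s)).add ((isHermitian_conjTranspose_mul_mul V hR).smul (.all _))).smul
      (.all _)) (matAbs_posSemidef A).1 fun x => ?_⟩
  have hcos : 0 < cos α := cos_pos_of_mem_Ioo ⟨by linarith [pi_pos], hα₁⟩
  have key := cos_mul_norm_dotProduct_mulVec_le hα₀ hα₁ (dotProduct_mulVec_mem_sector hA)
    x (V *ᵥ x) hs
  have hconj : star x ⬝ᵥ (Vᴴ * reM A * V) *ᵥ x = star (V *ᵥ x) ⬝ᵥ reM A *ᵥ (V *ᵥ x) := by
    rw [← mulVec_mulVec, star_dotProduct_conjTranspose_mul_mulVec]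
  rw [← hVA, star_dotProduct_conjTranspose_mul_mulVec]
  simp only [add_mulVec, smul_mulVec, dotProduct_add, dotProduct_smul, hconj,
    star_dotProduct_reM_mulVec_self, Complex.add_re, Complex.smul_re, Complex.ofReal_re,
    smul_eq_mul]
  calc (star (V *ᵥ x) ⬝ᵥ A *ᵥ x).re ≤ ‖star (V *ᵥ x) ⬝ᵥ A *ᵥ x‖ := Complex.re_le_norm _
    _ ≤ (cos α)⁻¹ * ((s * (star x ⬝ᵥ A *ᵥ x).re +
          s⁻¹ * (star (V *ᵥ x) ⬝ᵥ A *ᵥ (V *ᵥ x)).re) / 2) := by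
        rwa [le_inv_mul_iff₀ hcos]
    _ = _ := by ring
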